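/- Conditionally on X_n ≤ m+1 and F_m + F_{m+1} = h, the random variable F_m follows a binomial distribution with parameters h and p_m/(p_m + p_{m+1}). -/

import Mathlib

/-!
Sort the balls into urns below `m`, urn `m`, urn `m + 1` and urns above `m + 1`, and let
`s = P(urn < m)`. The event that no ball lies above `m + 1`, `t` balls lie in urn `m` and `u` in
urn `m + 1` is the disjoint union, over the set `U` of the `t + u` balls in urns `m, m + 1` and the
subset `I ⊆ U` of those in urn `m`, of product boxes of probability `p_m^t p_{m+1}^u s^(n-t-u)`;
hence it has probability `C(n, t+u) C(t+u, t) p_m^t p_{m+1}^u s^(n-t-u)`. Merging urns `m` and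
`m + 1`, the conditioning event has probability `C(n, h) (p_m + p_{m+1})^h s^(n-h)`, and the
quotient is the binomial weight.
-/

open MeasureTheory ProbabilityTheory
open scoped ENNReal NNReal

/-- `urnCount n ω k` is the number of balls (out of `n`) placed in urn `k`,
when `ω i` is the urn of ball `i`. -/
noncomputable def urnCount (n : ℕ) (ω : Fin n → ℕ) (k : ℕ) : ℕ :=
  Set.ncard {i : Fin n | ω i = k}

open Finset

section Trinomial

variable {ι α : Type*} [DecidableEq ι] {S A B : Set α}

def trinomialBox (S A B : Set α) (U I : Finset ι) : Set (ι → α) :=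
  Set.univ.pi fun i => if i ∈ I then A else if i ∈ U then B else S

theorem mem_trinomialBox_iff (hSA : Disjoint S A) (hSB : Disjoint S B) (hAB : Disjoint A B)
    {U I : Finset ι} (hIU : I ⊆ U) {ω : ι → α} :
    ω ∈ trinomialBox S A B U I ↔
      (∀ i, ω i ∈ S ∪ A ∪ B) ∧ ω ⁻¹' A = ↑I ∧ ω ⁻¹' B = ↑(U \ I) := by
  have coord : ∀ i x, (x ∈ if i ∈ I then A else if i ∈ U then B else S) ↔
      x ∈ S ∪ A ∪ B ∧ (x ∈ A ↔ i ∈ I) ∧ (x ∈ B ↔ i ∈ U \ I) := by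
    intro i x
    have := @hIU i
    have hsa : x ∈ S → x ∉ A := fun h => Set.disjoint_left.mp hSA h
    have hsb : x ∈ S → x ∉ B := fun h => Set.disjoint_left.mp hSB h
    have hab : x ∈ A → x ∉ B := fun h => Set.disjoint_left.mp hAB h
    split_ifs <;> simp only [Set.mem_union, mem_sdiff] <;> tauto
  simp only [trinomialBox, Set.mem_univ_pi, coord, Set.ext_iff, Set.mem_preimage, mem_coe,
    forall_and]

theorem measure_pi_trinomialBox [Fintype ι] [MeasurableSpace α] (ν : Measure α) [SigmaFinite ν]
    {U I : Finset ι} (hIU : I ⊆ U) :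
    Measure.pi (fun _ : ι => ν) (trinomialBox S A B U I)
      = ν A ^ #I * ν B ^ #(U \ I) * ν S ^ #Uᶜ := by
  rw [trinomialBox, Measure.pi_pi, ← prod_mul_prod_compl U, ← prod_sdiff hIU]
  have hI : ∀ i ∈ I, ν (if i ∈ I then A else if i ∈ U then B else S) = ν A := by
    intro i hi; rw [if_pos hi]
  have hUI : ∀ i ∈ U \ I, ν (if i ∈ I then A else if i ∈ U then B else S) = ν B := by
    intro i hi; rw [mem_sdiff] at hi; rw [if_neg hi.2, if_pos hi.1]
  have hU : ∀ i ∈ Uᶜ, ν (if i ∈ I then A else if i ∈ U then B else S) = ν S := by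
    intro i hi; rw [mem_compl] at hi; rw [if_neg (fun h => hi (hIU h)), if_neg hi]
  rw [prod_congr rfl hI, prod_congr rfl hUI, prod_congr rfl hU, prod_const, prod_const,
    prod_const]
  ring

theorem eq_of_mem_trinomialBox (hSA : Disjoint S A) (hSB : Disjoint S B) (hAB : Disjoint A B)
    {U I U' I' : Finset ι} (hIU : I ⊆ U) (hIU' : I' ⊆ U') {ω : ι → α}
    (hω : ω ∈ trinomialBox S A B U I) (hω' : ω ∈ trinomialBox S A B U' I') :
    U = U' ∧ I = I' := by
  obtain ⟨-, hA, hB⟩ := (mem_trinomialBox_iff hSA hSB hAB hIU).mp hω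
  obtain ⟨-, hA', hB'⟩ := (mem_trinomialBox_iff hSA hSB hAB hIU').mp hω'
  have hI : I = I' := coe_inj.mp (hA.symm.trans hA')
  have hUI : U \ I = U' \ I' := coe_inj.mp (hB.symm.trans hB')
  refine ⟨?_, hI⟩
  rw [← sdiff_union_of_subset hIU, ← sdiff_union_of_subset hIU', hUI, hI]

theorem trinomialEvent_eq_biUnion [Fintype ι] (hSA : Disjoint S A) (hSB : Disjoint S B)
    (hAB : Disjoint A B) (t u : ℕ) :
    {ω : ι → α | (∀ i, ω i ∈ S ∪ A ∪ B) ∧ (ω ⁻¹' A).ncard = t ∧ (ω ⁻¹' B).ncard = u}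
      = ⋃ U ∈ powersetCard (t + u) univ, ⋃ I ∈ powersetCard t U, trinomialBox S A B U I := by
  classical
  ext ω
  simp only [Set.mem_ofPred_eq, Set.mem_iUnion, mem_powersetCard, exists_prop]
  constructor
  · rintro ⟨hcov, rfl, rfl⟩
    have hIU : (ω ⁻¹' A).toFinset ⊆ (ω ⁻¹' (A ∪ B)).toFinset :=
      Set.toFinset_subset_toFinset.mpr (Set.preimage_mono Set.subset_union_left)
    refine ⟨_, ⟨subset_univ _, ?_⟩, _, ⟨hIU, Set.ncard_eq_toFinset_card' _ |>.symm⟩,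
      (mem_trinomialBox_iff hSA hSB hAB hIU).mpr ⟨hcov, by simp, ?_⟩⟩
    · rw [← Set.ncard_eq_toFinset_card', Set.preimage_union,
        Set.ncard_union_eq (hAB.preimage ω)]
    · ext i
      have : ω i ∈ A → ω i ∉ B := fun h => Set.disjoint_left.mp hAB h
      simp only [Set.mem_preimage, coe_sdiff, Set.coe_toFinset, Set.mem_sdiff, Set.mem_union]
      tauto
  · rintro ⟨U, ⟨-, hU⟩, I, ⟨hIU, hI⟩, hω⟩
    obtain ⟨hcov, hA, hB⟩ := (mem_trinomialBox_iff hSA hSB hAB hIU).mp hω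
    refine ⟨hcov, ?_, ?_⟩
    · rw [hA, Set.ncard_coe_finset, hI]
    · rw [hB, Set.ncard_coe_finset, card_sdiff_of_subset hIU, hU, hI, Nat.add_sub_cancel_left]

end Trinomial

theorem measure_pi_trinomial {ι α : Type*} [Fintype ι] [MeasurableSpace α] (ν : Measure α)
    [SigmaFinite ν] {S A B : Set α} (hS : MeasurableSet S) (hA : MeasurableSet A)
    (hB : MeasurableSet B) (hSA : Disjoint S A) (hSB : Disjoint S B) (hAB : Disjoint A B)
    (t u : ℕ) :
    Measure.pi (fun _ : ι => ν)
        {ω | (∀ i, ω i ∈ S ∪ A ∪ B) ∧ (ω ⁻¹' A).ncard = t ∧ (ω ⁻¹' B).ncard = u}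
      = (Fintype.card ι).choose (t + u) * (t + u).choose t
          * ν A ^ t * ν B ^ u * ν S ^ (Fintype.card ι - (t + u)) := by
  classical
  have hbox : ∀ U I, MeasurableSet (trinomialBox S A B U I : Set (ι → α)) := fun U I =>
    MeasurableSet.univ_pi fun i => by split_ifs <;> assumption
  have hdisj : ∀ {U I U' I'}, I ⊆ U → I' ⊆ U' → (U, I) ≠ (U', I') →
      Disjoint (trinomialBox S A B U I : Set (ι → α)) (trinomialBox S A B U' I') :=
    fun hIU hIU' hne => Set.disjoint_left.mpr fun _ hω hω' =>
      hne (Prod.ext_iff.mpr (eq_of_mem_trinomialBox hSA hSB hAB hIU hIU' hω hω'))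
  rw [trinomialEvent_eq_biUnion hSA hSB hAB, measure_biUnion_finset]
  · have hinner : ∀ U ∈ powersetCard (t + u) univ,
        Measure.pi (fun _ : ι => ν) (⋃ I ∈ powersetCard t U, trinomialBox S A B U I)
          = (t + u).choose t * (ν A ^ t * ν B ^ u * ν S ^ (Fintype.card ι - (t + u))) := by
      intro U hU
      rw [mem_powersetCard] at hU
      rw [measure_biUnion_finset (fun I hI I' hI' hne => hdisj (mem_powersetCard.mp hI).1
          (mem_powersetCard.mp hI').1 (by simpa using hne)) fun I _ => hbox U I]
      have hterm : ∀ I ∈ powersetCard t U, Measure.pi (fun _ : ι => ν) (trinomialBox S A B U I)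
          = ν A ^ t * ν B ^ u * ν S ^ (Fintype.card ι - (t + u)) := by
        intro I hI
        rw [mem_powersetCard] at hI
        rw [measure_pi_trinomialBox ν hI.1, card_sdiff_of_subset hI.1, card_compl, hU.2, hI.2,
          Nat.add_sub_cancel_left]
      rw [sum_congr rfl hterm, sum_const, card_powersetCard, hU.2, nsmul_eq_mul]
    rw [sum_congr rfl hinner, sum_const, card_powersetCard, card_univ, nsmul_eq_mul]
    ring
  · intro U hU U' hU' hne
    simp only [Function.onFun, Set.disjoint_iUnion₂_left, Set.disjoint_iUnion₂_right]
    intro I hI I' hI'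
    exact hdisj (mem_powersetCard.mp hI').1 (mem_powersetCard.mp hI).1 (by simp [hne])
  · exact fun U _ => Finset.measurableSet_biUnion _ fun I _ => hbox U I

theorem measure_pi_binomial {ι α : Type*} [Fintype ι] [MeasurableSpace α] (ν : Measure α)
    [SigmaFinite ν] {S A : Set α} (hS : MeasurableSet S) (hA : MeasurableSet A)
    (hSA : Disjoint S A) (t : ℕ) :
    Measure.pi (fun _ : ι => ν) {ω | (∀ i, ω i ∈ S ∪ A) ∧ (ω ⁻¹' A).ncard = t}
      = (Fintype.card ι).choose t * ν A ^ t * ν S ^ (Fintype.card ι - t) := by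
  simpa using measure_pi_trinomial ν hS hA MeasurableSet.empty hSA (Set.disjoint_empty S)
    (Set.disjoint_empty A) t 0

theorem ENNReal.pow_mul_pow_div_add_pow {a b : ℝ≥0∞} (ha : a ≠ ∞) (hb : b ≠ ∞) (hab : a + b ≠ 0)
    {t h : ℕ} (ht : t ≤ h) :
    a ^ t * b ^ (h - t) / (a + b) ^ h = (a / (a + b)) ^ t * (1 - a / (a + b)) ^ (h - t) := by
  have hsub : 1 - a / (a + b) = b / (a + b) :=
    ENNReal.sub_eq_of_eq_add_rev (ENNReal.div_ne_top ha hab) (by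
      rw [ENNReal.div_add_div_same, ENNReal.div_self hab (ENNReal.add_ne_top.mpr ⟨ha, hb⟩)])
  obtain ⟨d, rfl⟩ := Nat.exists_eq_add_of_le ht
  rw [hsub, Nat.add_sub_cancel_left, div_eq_mul_inv, div_eq_mul_inv, div_eq_mul_inv, mul_pow,
    mul_pow, ENNReal.inv_pow, pow_add]
  ring


theorem urnCount_eq_ncard_preimage (n : ℕ) (ω : Fin n → ℕ) (k : ℕ) :
    urnCount n ω k = (ω ⁻¹' {k}).ncard := rfl

theorem urnCount_eq_zero_iff (n : ℕ) (ω : Fin n → ℕ) (k : ℕ) :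
    urnCount n ω k = 0 ↔ ∀ i, ω i ≠ k := by
  rw [urnCount, Set.ncard_eq_zero (Set.toFinite _), Set.eq_empty_iff_forall_notMem]
  rfl

theorem forall_urnCount_eq_zero_iff_mem (n m : ℕ) (ω : Fin n → ℕ) :
    (∀ k, m + 1 < k → urnCount n ω k = 0) ↔ ∀ i, ω i ∈ Set.Iio m ∪ {m} ∪ {m + 1} := by
  simp only [urnCount_eq_zero_iff, Set.mem_union, Set.mem_Iio, Set.mem_singleton_iff]
  refine ⟨fun h i => ?_, fun h k hk i hi => ?_⟩
  · by_contra hi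
    exact h (ω i) (by omega) i rfl
  · have := h i
    omega

section LastTwoUrns

variable {n m h : ℕ}

def lastTwoEvent (n m h : ℕ) : Set (Fin n → ℕ) :=
  {ω | (∀ k, m + 1 < k → urnCount n ω k = 0) ∧ urnCount n ω m + urnCount n ω (m + 1) = h}

theorem lastTwoEvent_eq :
    lastTwoEvent n m h =
      {ω | (∀ i, ω i ∈ Set.Iio m ∪ ({m} ∪ {m + 1})) ∧ (ω ⁻¹' ({m} ∪ {m + 1})).ncard = h} := by
  ext ω
  simp only [lastTwoEvent, Set.mem_ofPred_eq, forall_urnCount_eq_zero_iff_mem, Set.union_assoc]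
  have hmid : Disjoint ({m} : Set ℕ) {m + 1} := by simp
  rw [Set.preimage_union, Set.ncard_union_eq (hmid.preimage ω),
    urnCount_eq_ncard_preimage, urnCount_eq_ncard_preimage]

theorem lastTwoEvent_inter_eq {t : ℕ} (ht : t ≤ h) :
    lastTwoEvent n m h ∩ {ω | urnCount n ω m = t} =
      {ω | (∀ i, ω i ∈ Set.Iio m ∪ {m} ∪ {m + 1}) ∧
        (ω ⁻¹' {m}).ncard = t ∧ (ω ⁻¹' {m + 1}).ncard = h - t} := by
  ext ω
  simp only [lastTwoEvent, Set.mem_inter_iff, Set.mem_ofPred_eq, forall_urnCount_eq_zero_iff_mem]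
  simp only [urnCount_eq_ncard_preimage]
  constructor
  · rintro ⟨⟨hω, hsum⟩, rfl⟩
    exact ⟨hω, rfl, by omega⟩
  · rintro ⟨hω, rfl, hnext⟩
    exact ⟨⟨hω, by omega⟩, rfl⟩

theorem lastTwoEvent_inter_eq_empty {t : ℕ} (ht : h < t) :
    lastTwoEvent n m h ∩ {ω | urnCount n ω m = t} = ∅ := by
  ext ω
  simp only [lastTwoEvent, Set.mem_inter_iff, Set.mem_ofPred_eq, Set.mem_empty_iff_false,
    iff_false]
  omega

variable (p : PMF ℕ)

theorem measure_lastTwoEvent :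
    Measure.pi (fun _ : Fin n => p.toMeasure) (lastTwoEvent n m h)
      = n.choose h * p.toMeasure (Set.Iio m) ^ (n - h) * (p m + p (m + 1)) ^ h := by
  rw [lastTwoEvent_eq, measure_pi_binomial _ measurableSet_Iio MeasurableSet.of_discrete
      (by simp), measure_union (by simp) (measurableSet_singleton _),
    p.toMeasure_apply_singleton _ (measurableSet_singleton _),
    p.toMeasure_apply_singleton _ (measurableSet_singleton _), Fintype.card_fin]
  ring

theorem measure_lastTwoEvent_inter {t : ℕ} (ht : t ≤ h) :
    Measure.pi (fun _ : Fin n => p.toMeasure) (lastTwoEvent n m h ∩ {ω | urnCount n ω m = t})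
      = n.choose h * p.toMeasure (Set.Iio m) ^ (n - h)
          * (h.choose t * (p m ^ t * p (m + 1) ^ (h - t))) := by
  rw [lastTwoEvent_inter_eq ht, measure_pi_trinomial _ measurableSet_Iio
      (measurableSet_singleton _) (measurableSet_singleton _) (by simp) (by simp) (by simp),
    p.toMeasure_apply_singleton _ (measurableSet_singleton _),
    p.toMeasure_apply_singleton _ (measurableSet_singleton _), Fintype.card_fin,
    Nat.add_sub_cancel' ht]
  ring

end LastTwoUrns

theorem stmt2_general (p : PMF ℕ) (hp : ∀ k, 1 ≤ k → p k ≠ 0)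
    (n m h : ℕ) (hm : 1 ≤ m)
    (hB : (Measure.pi fun _ : Fin n => p.toMeasure)
        {ω | (∀ k, m + 1 < k → urnCount n ω k = 0) ∧
              urnCount n ω m + urnCount n ω (m + 1) = h} ≠ 0) :
    ∀ t : ℕ,
      ProbabilityTheory.cond (Measure.pi fun _ : Fin n => p.toMeasure)
          {ω | (∀ k, m + 1 < k → urnCount n ω k = 0) ∧
                urnCount n ω m + urnCount n ω (m + 1) = h}
          {ω | urnCount n ω m = t}
        = (h.choose t : ℝ≥0∞) * (p m / (p m + p (m + 1))) ^ t
            * (1 - p m / (p m + p (m + 1))) ^ (h - t) := by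
  intro t
  change (Measure.pi fun _ => p.toMeasure)[_ | lastTwoEvent n m h] = _
  rw [cond_apply MeasurableSet.of_discrete, ← ENNReal.div_eq_inv_mul]
  rcases le_or_gt t h with ht | ht
  · have hB' : Measure.pi (fun _ : Fin n => p.toMeasure) (lastTwoEvent n m h) ≠ 0 := hB
    rw [measure_lastTwoEvent] at hB'
    have hx : (n.choose h * p.toMeasure (Set.Iio m) ^ (n - h) : ℝ≥0∞) ≠ ∞ :=
      ENNReal.mul_ne_top (ENNReal.natCast_ne_top _) (ENNReal.pow_ne_top (measure_ne_top _ _))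
    have hab : p m + p (m + 1) ≠ 0 := fun h0 => hp m hm (add_eq_zero.mp h0).1
    rw [measure_lastTwoEvent, measure_lastTwoEvent_inter p ht,
      ENNReal.mul_div_mul_left _ _ (left_ne_zero_of_mul hB') hx, mul_div_assoc,
      ENNReal.pow_mul_pow_div_add_pow (p.apply_ne_top m) (p.apply_ne_top (m + 1)) hab ht,
      mul_assoc]
  · rw [lastTwoEvent_inter_eq_empty ht, measure_empty, ENNReal.zero_div,
      Nat.choose_eq_zero_of_lt ht, Nat.cast_zero, zero_mul, zero_mul]

/-- Urn model: `n` balls placed independently, each in urn `k` with probability `p k > 0`.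
Conditionally on `X_n ≤ m+1` and `F_m + F_{m+1} = h`, the count `F_m` is binomial with
parameters `h` and `p m / (p m + p (m+1))`. -/
theorem stmt2 (p : PMF ℕ) (hp0 : p 0 = 0) (hp : ∀ k, 1 ≤ k → p k ≠ 0)
    (n m h : ℕ) (hm : 1 ≤ m)
    (hB : (Measure.pi fun _ : Fin n => p.toMeasure)
        {ω | (∀ k, m + 1 < k → urnCount n ω k = 0) ∧
              urnCount n ω m + urnCount n ω (m + 1) = h} ≠ 0) :
    ∀ t : ℕ,
      ProbabilityTheory.cond (Measure.pi fun _ : Fin n => p.toMeasure)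
          {ω | (∀ k, m + 1 < k → urnCount n ω k = 0) ∧
                urnCount n ω m + urnCount n ω (m + 1) = h}
          {ω | urnCount n ω m = t}
        = (h.choose t : ℝ≥0∞) * (p m / (p m + p (m + 1))) ^ t
            * (1 - p m / (p m + p (m + 1))) ^ (h - t) :=
  stmt2_general p hp n m h hm hB
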